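/- arXiv:1011.5686 — 2 statements merged into one kernel-verified Lean document; each statement's English description precedes it below -/
import Mathlib

section
/- For Polish spaces S and S', probability measures μ on S, μ' on S', and ν a probability measure on S×S' with first marginal ν⁽¹⁾ on S, the relative entropy satisfies the chain rule H(ν | μ⊗μ') = H(ν⁽¹⁾ | μ) + H(ν | ν⁽¹⁾⊗μ'). -/
/-!
Since `S'` is standard Borel, `ν` disintegrates as `ν⁽¹⁾ ⊗ κ` for a Markov kernel `κ`, while
`μ ⊗ μ'` and `ν⁽¹⁾ ⊗ μ'` are the composition products of `μ` and `ν⁽¹⁾` with the constant kernel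
`μ'`. The identity is then the chain rule for the Kullback–Leibler divergence of composition
products, which comes from `dν/d(μ ⊗ μ') = dν⁽¹⁾/dμ · dν/d(ν⁽¹⁾ ⊗ μ')`; for probability
measures `relEnt` is that divergence.
-/

open MeasureTheory ProbabilityTheory Filter Real

open Classical in
/-- Relative entropy `H(ν|μ)`. -/
noncomputable def relEnt {S : Type*} [MeasurableSpace S] (ν μ : Measure S) : EReal :=
  if ν ≪ μ ∧ Integrable (llr ν μ) ν then ((∫ x, llr ν μ x ∂ν : ℝ) : EReal) else ⊤

open InformationTheory

/-- `klDiv ν μ` carries the extra term `μ univ - ν univ`, which vanishes here. -/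
lemma relEnt_eq_klDiv {α : Type*} [MeasurableSpace α] {ν μ : Measure α}
    [IsFiniteMeasure ν] [IsFiniteMeasure μ] (h_eq : ν Set.univ = μ Set.univ) :
    relEnt ν μ = klDiv ν μ := by
  unfold relEnt
  split_ifs with h
  · rw [← toReal_klDiv_of_measure_eq h.1 h_eq, EReal.coe_ennreal_toReal (klDiv_ne_top h.1 h.2)]
  · rw [klDiv_eq_top_iff.mpr fun hac hint ↦ h ⟨hac, hint⟩, EReal.coe_ennreal_top]

lemma relEnt_eq_klDiv_of_isProbabilityMeasure {α : Type*} [MeasurableSpace α] (ν μ : Measure α)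
    [IsProbabilityMeasure ν] [IsProbabilityMeasure μ] :
    relEnt ν μ = klDiv ν μ :=
  relEnt_eq_klDiv (by simp)

theorem relEnt_chain_rule_general {S S' : Type*}
    [MeasurableSpace S]
    [MeasurableSpace S'] [TopologicalSpace S'] [PolishSpace S'] [BorelSpace S']
    (μ : Measure S) (μ' : Measure S') (ν : Measure (S × S'))
    [IsProbabilityMeasure μ] [IsProbabilityMeasure μ'] [IsProbabilityMeasure ν] :
    relEnt ν (μ.prod μ') =
      relEnt (ν.map Prod.fst) μ + relEnt ν ((ν.map Prod.fst).prod μ') := by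
  have : Nonempty S' := (nonempty_prod.mp (nonempty_of_isProbabilityMeasure ν)).2
  change relEnt ν (μ.prod μ') = relEnt ν.fst μ + relEnt ν (ν.fst.prod μ')
  simp only [relEnt_eq_klDiv_of_isProbabilityMeasure, ← EReal.coe_ennreal_add]
  rw [← Measure.compProd_const, ← Measure.compProd_const, ← ν.disintegrate ν.condKernel,
    klDiv_compProd_eq_add, Measure.fst_compProd]

/-- Chain rule for relative entropy:
`H(ν | μ ⊗ μ') = H(ν⁽¹⁾ | μ) + H(ν | ν⁽¹⁾ ⊗ μ')`, where `ν⁽¹⁾` is the first marginal. -/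
theorem relEnt_chain_rule {S S' : Type*}
    [MeasurableSpace S] [TopologicalSpace S] [PolishSpace S] [BorelSpace S]
    [MeasurableSpace S'] [TopologicalSpace S'] [PolishSpace S'] [BorelSpace S']
    (μ : Measure S) (μ' : Measure S') (ν : Measure (S × S'))
    [IsProbabilityMeasure μ] [IsProbabilityMeasure μ'] [IsProbabilityMeasure ν] :
    relEnt ν (μ.prod μ') =
      relEnt (ν.map Prod.fst) μ + relEnt ν ((ν.map Prod.fst).prod μ') :=
  relEnt_chain_rule_general μ μ' ν
end

section
/- For the Gibbs measure G = G_{φ,m} = γ ⊗ K₂ ⊗ ⋯ ⊗ K_n defined from the Parisi recursion, for each j one has ∫ H(K_j(x⁽ʲ⁻¹⁾, ·) | μ_j) G⁽ʲ⁻¹⁾(dx⁽ʲ⁻¹⁾) = m_j (∫ φ_j dG⁽ʲ⁾ − ∫ φ_{j−1} dG⁽ʲ⁻¹⁾). -/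
/-!
The Gibbs measure has density `exp (∑ₖ mₖ (φₖ − φₖ₋₁))` against `μ = μ₁ ⊗ ⋯ ⊗ μₙ`. By the Parisi
recursion the `k`-th factor integrates to one in the `k`-th coordinate, on which the earlier
factors do not depend; integrating out the coordinates one at a time shows that the partial
product over `k ≤ t` is the density of `G⁽ᵗ⁾`, i.e. `G⁽ʲ⁾ = G⁽ʲ⁻¹⁾ ⊗ K_j`. Since
`log dK_j/dμ_j = m_j (φ_j − φ_{j−1})`, the entropy `H(K_j(x,·) | μ_j)` is the `K_j(x,·)`-integral
of this function, and integrating it against `G⁽ʲ⁻¹⁾` gives its `G⁽ʲ⁾`-integral.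
-/

open MeasureTheory ProbabilityTheory Filter Real

open Classical in
/-- Empirical measure `(1/N) ∑_{i<N} δ_{x i}` as a probability measure (junk value for `N = 0`). -/
noncomputable def empMeas {T : Type*} [MeasurableSpace T] [Nonempty T] (N : ℕ) (x : ℕ → T) :
    ProbabilityMeasure T :=
  if h : 0 < N then
    ⟨(N : ENNReal)⁻¹ • ∑ i ∈ Finset.range N, Measure.dirac (x i), by
      constructor
      simp only [Measure.smul_apply, Measure.coe_finset_sum, Finset.sum_apply,
        Measure.dirac_apply' _ MeasurableSet.univ, Set.indicator_univ,
        Pi.one_apply, Finset.sum_const, Finset.card_range, nsmul_eq_mul, mul_one,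
        smul_eq_mul]
      exact ENNReal.inv_mul_cancel (by exact_mod_cast h.ne') (by simp)⟩
  else ⟨Measure.dirac (Classical.arbitrary T), inferInstance⟩

/-- Projection onto the first `j+1` coordinates. -/
def firstCoords {S : Type*} {n : ℕ} (j : Fin n) (x : Fin n → S) : Fin (j.1 + 1) → S :=
  fun k => x (Fin.castLE j.2 k)

lemma measurable_firstCoords {S : Type*} [MeasurableSpace S] {n : ℕ} (j : Fin n) :
    Measurable (firstCoords (S := S) j) :=
  measurable_pi_lambda _ fun _k => measurable_pi_apply _

/-- The marginal of a probability measure on `Sⁿ` on the first `j+1` coordinates. -/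
noncomputable def margPM {S : Type*} [MeasurableSpace S] {n : ℕ} (j : Fin n)
    (ν : ProbabilityMeasure (Fin n → S)) : ProbabilityMeasure (Fin (j.1 + 1) → S) :=
  ν.map (measurable_firstCoords j).aemeasurable

/-- The marginal of a measure on `Sⁿ` on the first `j+1` coordinates. -/
noncomputable def margM {S : Type*} [MeasurableSpace S] {n : ℕ} (j : Fin n)
    (ν : Measure (Fin n → S)) : Measure (Fin (j.1 + 1) → S) :=
  ν.map (firstCoords j)

/-- The marginal `μ⁽ʲ⁾ = μ₁ ⊗ ⋯ ⊗ μ_{j+1}` of the product measure. -/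
noncomputable def margPi {S : Type*} [MeasurableSpace S] {n : ℕ} (μ : Fin n → Measure S)
    (j : Fin n) : Measure (Fin (j.1 + 1) → S) :=
  Measure.pi (fun k => μ (Fin.castLE j.2 k))

/-- `Γ_j = γ₁ + ⋯ + γ_{j+1}`. -/
noncomputable def gam {n : ℕ} (γ : Fin n → ℝ) (j : Fin n) : ℝ :=
  ∑ k : Fin (j.1 + 1), γ (Fin.castLE j.2 k)
section Parisi

variable {S : Type*} [MeasurableSpace S]

/-- The Parisi recursion: `phiIter μ m φ k` is `φ_{n−k}`, i.e. `φ_n = φ` and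
`φ_{j−1} = (1/m_j) log ∫ exp(m_j φ_j) dμ_j`, written as a function on `Sⁿ`
(depending only on the first `n−k` coordinates). -/
noncomputable def phiIter {n : ℕ} (μ : Fin n → Measure S) (m : Fin n → ℝ)
    (φ : (Fin n → S) → ℝ) : ℕ → (Fin n → S) → ℝ
  | 0 => φ
  | (k+1) => fun x =>
      if h : n - k - 1 < n then
        (1 / m ⟨n - k - 1, h⟩) * Real.log (∫ y, Real.exp
          (m ⟨n - k - 1, h⟩ * phiIter μ m φ k (Function.update x ⟨n - k - 1, h⟩ y))
          ∂(μ ⟨n - k - 1, h⟩))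
      else phiIter μ m φ k x

/-- `φ₀(m)`, the final (constant) value of the Parisi recursion. -/
noncomputable def phiZero {n : ℕ} [Nonempty S] (μ : Fin n → Measure S) (m : Fin n → ℝ)
    (φ : (Fin n → S) → ℝ) : ℝ :=
  phiIter μ m φ n (fun _ => Classical.arbitrary S)

/-- `Parisi(m,φ) = ∑ᵢ (γᵢ log 2)/mᵢ + φ₀(m) − log 2`. -/
noncomputable def parisiVal {n : ℕ} [Nonempty S] (γ : Fin n → ℝ) (μ : Fin n → Measure S)
    (m : Fin n → ℝ) (φ : (Fin n → S) → ℝ) : ℝ :=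
  (∑ i, γ i * Real.log 2 / m i) + phiZero μ m φ - Real.log 2

/-- `Δ = {m : 0 < m₁ ≤ m₂ ≤ ⋯ ≤ m_n ≤ 1}`. -/
def inDelta {n : ℕ} (m : Fin n → ℝ) : Prop :=
  (∀ i, 0 < m i ∧ m i ≤ 1) ∧ Monotone m

end Parisi

section Gibbs

variable {S : Type*} [MeasurableSpace S]

/-- The Gibbs kernel `K_{j+1}(x⁽ʲ⁾, dy) = e^{m_j φ_{j+1}(x⁽ʲ⁾,y)} μ_j(dy) / e^{m_j φ_j(x⁽ʲ⁾)}`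
(0-based level `j`), from the Parisi recursion. -/
noncomputable def gibbsKernel {n : ℕ} (μ : Fin n → Measure S) (m : Fin n → ℝ)
    (φ : (Fin n → S) → ℝ) (j : Fin n) (x : Fin n → S) : Measure S :=
  (μ j).withDensity (fun y => ENNReal.ofReal (Real.exp
    (m j * phiIter μ m φ (n - ((j : ℕ) + 1)) (Function.update x j y)
      - m j * phiIter μ m φ (n - (j : ℕ)) x)))

/-- The Gibbs measure `G_{φ,m} = γ ⊗ K₂ ⊗ ⋯ ⊗ K_n`, realized through its density
`exp(∑_j m_j (φ_j − φ_{j−1}))` with respect to `μ = μ₁ ⊗ ⋯ ⊗ μ_n`. -/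
noncomputable def gibbsMeasure {n : ℕ} (μ : Fin n → Measure S) (m : Fin n → ℝ)
    (φ : (Fin n → S) → ℝ) : Measure (Fin n → S) :=
  (Measure.pi μ).withDensity (fun x => ENNReal.ofReal (Real.exp
    (∑ j : Fin n, (m j * phiIter μ m φ (n - ((j : ℕ) + 1)) x
      - m j * phiIter μ m φ (n - (j : ℕ)) x))))

end Gibbs


section PiUpdate

variable {ι : Type*} [Fintype ι] [DecidableEq ι] {X : ι → Type*} [∀ i, MeasurableSpace (X i)]
  (μ : ∀ i, Measure (X i)) [∀ i, IsProbabilityMeasure (μ i)]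

theorem measurePreserving_update_prod (a : ι) :
    MeasurePreserving (fun p : (∀ i, X i) × X a => Function.update p.1 a p.2)
      ((Measure.pi μ).prod (μ a)) (Measure.pi μ) := by
  refine ⟨measurable_update', (Measure.pi_eq fun s hs => ?_).symm⟩
  have hpre : (fun p : (∀ i, X i) × X a => Function.update p.1 a p.2) ⁻¹' Set.univ.pi s
      = Set.univ.pi (Function.update s a Set.univ) ×ˢ s a := by
    ext p
    simp only [Set.mem_preimage, Set.mem_univ_pi, Set.mem_prod]
    constructor
    · intro hp
      refine ⟨fun i => ?_, by simpa using hp a⟩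
      rcases eq_or_ne i a with rfl | hi
      · simp
      · simpa [hi] using hp i
    · rintro ⟨hp, ha⟩ i
      rcases eq_or_ne i a with rfl | hi
      · simpa using ha
      · simpa [hi] using hp i
  rw [Measure.map_apply measurable_update' (.univ_pi hs), hpre, Measure.prod_prod, Measure.pi_pi]
  simp only [Function.apply_update (fun i (t : Set (X i)) => μ i t), measure_univ]
  rw [Finset.prod_update_of_mem (Finset.mem_univ a), one_mul, Finset.sdiff_singleton_eq_erase,
    Finset.prod_erase_mul _ _ (Finset.mem_univ a)]

theorem integral_pi_eq_integral_integral_update (a : ι) {f : (∀ i, X i) → ℝ}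
    (hf : Integrable f (Measure.pi μ)) :
    ∫ x, f x ∂Measure.pi μ = ∫ x, ∫ y, f (Function.update x a y) ∂μ a ∂Measure.pi μ := by
  have h := measurePreserving_update_prod μ a
  have hmap := integral_map h.measurable.aemeasurable (h.map_eq ▸ hf.aestronglyMeasurable)
  rw [h.map_eq] at hmap
  rw [hmap]
  exact integral_prod _ ((h.integrable_comp hf.aestronglyMeasurable).mpr hf)

theorem integral_pi_mul_exp_eq_of_integral_exp_update_eq_one (a : ι) {g ψ : (∀ i, X i) → ℝ}
    (hg : ∀ x y, g (Function.update x a y) = g x)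
    (hψ : ∀ x, ∫ y, exp (ψ (Function.update x a y)) ∂μ a = 1)
    (hint : Integrable (fun x => g x * exp (ψ x)) (Measure.pi μ)) :
    ∫ x, g x * exp (ψ x) ∂Measure.pi μ = ∫ x, g x ∂Measure.pi μ := by
  rw [integral_pi_eq_integral_integral_update μ a hint]
  simp only [hg, integral_const_mul, hψ, mul_one]

end PiUpdate

theorem integrable_exp_of_abs_le {α : Type*} [MeasurableSpace α] {ν : Measure α}
    [IsFiniteMeasure ν] {f : α → ℝ} (hf : Measurable f) {C : ℝ} (hC : ∀ x, |f x| ≤ C) :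
    Integrable (fun x => exp (f x)) ν :=
  .of_bound hf.exp.aestronglyMeasurable (exp C) (ae_of_all _ fun x => by
    rw [Real.norm_eq_abs, abs_exp, exp_le_exp]
    exact le_of_abs_le (hC x))

theorem abs_log_integral_exp_le {α : Type*} [MeasurableSpace α] {ν : Measure α}
    [IsProbabilityMeasure ν] {f : α → ℝ} (hf : Measurable f) {C : ℝ} (hC : ∀ x, |f x| ≤ C) :
    |log (∫ x, exp (f x) ∂ν)| ≤ C := by
  have hint := integrable_exp_of_abs_le (ν := ν) hf hC
  have hlow : exp (-C) ≤ ∫ x, exp (f x) ∂ν := by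
    simpa using integral_mono (integrable_const (exp (-C))) hint
      fun x => exp_le_exp.mpr (neg_le_of_abs_le (hC x))
  have hup : ∫ x, exp (f x) ∂ν ≤ exp C := by
    simpa using integral_mono hint (integrable_const (exp C))
      fun x => exp_le_exp.mpr (le_of_abs_le (hC x))
  have hpos := (exp_pos (-C)).trans_le hlow
  exact abs_le.mpr ⟨(le_log_iff_exp_le hpos).mpr hlow, (log_le_iff_le_exp hpos).mpr hup⟩

theorem relEnt_withDensity_exp {α : Type*} [MeasurableSpace α] {ν : Measure α} [SigmaFinite ν]
    {ℓ : α → ℝ} (hℓ : Measurable ℓ)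
    (hint : Integrable ℓ (ν.withDensity fun y => ENNReal.ofReal (exp (ℓ y)))) :
    relEnt (ν.withDensity fun y => ENNReal.ofReal (exp (ℓ y))) ν
      = ((∫ y, ℓ y ∂ν.withDensity fun y => ENNReal.ofReal (exp (ℓ y)) : ℝ) : EReal) := by
  have hac := withDensity_absolutelyContinuous ν fun y => ENNReal.ofReal (exp (ℓ y))
  have hllr : llr (ν.withDensity fun y => ENNReal.ofReal (exp (ℓ y))) ν =ᵐ[ν] ℓ := by
    filter_upwards [Measure.rnDeriv_withDensity ν hℓ.exp.ennreal_ofReal] with y hy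
    rw [llr, hy, ENNReal.toReal_ofReal (exp_nonneg _), log_exp]
  rw [relEnt, if_pos ⟨hac, hint.congr (hac.ae_eq hllr).symm⟩, integral_congr_ae (hac.ae_eq hllr)]

section ParisiRecursion

variable {S : Type*} [MeasurableSpace S] {n : ℕ} (μ : Fin n → Measure S) (m : Fin n → ℝ)
  (φ : (Fin n → S) → ℝ)

theorem measurable_phiIter [∀ j, SFinite (μ j)] (hφ : Measurable φ) (k : ℕ) :
    Measurable (phiIter μ m φ k) := by
  induction k with
  | zero => exact hφ
  | succ k ih =>
    unfold phiIter
    split_ifs with h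
    · have hexp : Measurable fun p : (Fin n → S) × S =>
          exp (m ⟨n - k - 1, h⟩ * phiIter μ m φ k (Function.update p.1 ⟨n - k - 1, h⟩ p.2)) :=
        ((ih.comp measurable_update').const_mul _).exp
      exact (hexp.stronglyMeasurable.integral_prod_right'.measurable.log).const_mul _
    · exact ih

theorem abs_phiIter_le [∀ j, IsProbabilityMeasure (μ j)] (hm : ∀ i, m i ≠ 0)
    (hφ : Measurable φ) {C : ℝ} (hC : ∀ x, |φ x| ≤ C) (k : ℕ) (x : Fin n → S) :
    |phiIter μ m φ k x| ≤ C := by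
  induction k generalizing x with
  | zero => exact hC x
  | succ k ih =>
    unfold phiIter
    split_ifs with h
    · set i : Fin n := ⟨n - k - 1, h⟩
      have hlog := abs_log_integral_exp_le (ν := μ i) (C := |m i| * C)
        (((measurable_phiIter μ m φ hφ k).comp (measurable_update x (a := i))).const_mul (m i))
        fun y => by rw [abs_mul]; exact mul_le_mul_of_nonneg_left (ih _) (abs_nonneg _)
      rw [abs_mul, abs_div, abs_one, div_mul_eq_mul_div, one_mul,
        div_le_iff₀ (abs_pos.mpr (hm i)), mul_comm]
      exact hlog
    · exact ih x

theorem phiIter_update (k : ℕ) {i : Fin n} (hi : n ≤ k + i) (x : Fin n → S) (y : S) :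
    phiIter μ m φ k (Function.update x i y) = phiIter μ m φ k x := by
  induction k generalizing x with
  | zero => omega
  | succ k ih =>
    unfold phiIter
    split_ifs with h
    · rcases eq_or_ne i ⟨n - k - 1, h⟩ with rfl | hne
      · simp only [Function.update_idem]
      · have hki : n ≤ k + i := by
          have : (i : ℕ) ≠ n - k - 1 := fun h' => hne (Fin.ext h')
          omega
        simp only [Function.update_comm hne, ih hki]
    · exact ih (by omega) x

theorem phiIter_sub_eq_log_integral (t : Fin n) (x : Fin n → S) :
    phiIter μ m φ (n - t) x = 1 / m t * log (∫ y, exp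
      (m t * phiIter μ m φ (n - (t + 1)) (Function.update x t y)) ∂μ t) := by
  obtain ⟨t, ht⟩ := t
  obtain ⟨k, hk⟩ : ∃ k, n - t = k + 1 := ⟨n - t - 1, by omega⟩
  have hkt : n - k - 1 = t := by omega
  have hk' : n - (t + 1) = k := by omega
  simp only [hk, hk', phiIter, hkt, dif_pos ht]

end ParisiRecursion

section GibbsDensity

variable {S : Type*} [MeasurableSpace S] {n : ℕ} (μ : Fin n → Measure S) (m : Fin n → ℝ)
  (φ : (Fin n → S) → ℝ)

/-- `m_{k+1} (φ_{k+1} − φ_k)` in the paper's 1-based indexing of `m`, `μ`, `K`: the log-density of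
`K_{k+1}(x, ·)` against `μ_{k+1}`. -/
noncomputable def gibbsIncrement (k : Fin n) (x : Fin n → S) : ℝ :=
  m k * phiIter μ m φ (n - (k + 1)) x - m k * phiIter μ m φ (n - k) x

/-- The log-density of the marginal `G⁽ᵗ⁾` against `μ`. -/
noncomputable def gibbsLogDensity (t : ℕ) (x : Fin n → S) : ℝ :=
  ∑ k : Fin n with k.1 < t, gibbsIncrement μ m φ k x

theorem measurable_gibbsIncrement [∀ j, SFinite (μ j)] (hφ : Measurable φ) (k : Fin n) :
    Measurable (gibbsIncrement μ m φ k) :=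
  ((measurable_phiIter μ m φ hφ _).const_mul _).sub ((measurable_phiIter μ m φ hφ _).const_mul _)

theorem measurable_gibbsLogDensity [∀ j, SFinite (μ j)] (hφ : Measurable φ) (t : ℕ) :
    Measurable (gibbsLogDensity μ m φ t) :=
  Finset.measurable_sum _ fun k _ => measurable_gibbsIncrement μ m φ hφ k

theorem gibbsIncrement_update {k i : Fin n} (hki : k < i) (x : Fin n → S) (y : S) :
    gibbsIncrement μ m φ k (Function.update x i y) = gibbsIncrement μ m φ k x := by
  have hki : (k : ℕ) < i := hki
  rw [gibbsIncrement, gibbsIncrement, phiIter_update μ m φ _ (by omega),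
    phiIter_update μ m φ _ (by omega)]

theorem gibbsLogDensity_update {t : ℕ} {i : Fin n} (hti : t ≤ i) (x : Fin n → S) (y : S) :
    gibbsLogDensity μ m φ t (Function.update x i y) = gibbsLogDensity μ m φ t x :=
  Finset.sum_congr rfl fun _ hk =>
    gibbsIncrement_update μ m φ (Fin.lt_def.mpr ((Finset.mem_filter.mp hk).2.trans_le hti)) x y

theorem gibbsLogDensity_succ (t : Fin n) (x : Fin n → S) :
    gibbsLogDensity μ m φ (t + 1) x = gibbsLogDensity μ m φ t x + gibbsIncrement μ m φ t x := by
  have hfilter : (Finset.univ.filter fun k : Fin n => k.1 < t + 1)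
      = insert t (Finset.univ.filter fun k : Fin n => k.1 < t) := by
    ext k
    simp only [Finset.mem_filter, Finset.mem_univ, true_and, Finset.mem_insert, Fin.ext_iff]
    omega
  rw [gibbsLogDensity, gibbsLogDensity, hfilter, Finset.sum_insert (by simp), add_comm]

theorem gibbsKernel_eq_withDensity (j : Fin n) (x : Fin n → S) :
    gibbsKernel μ m φ j x = (μ j).withDensity fun y =>
      ENNReal.ofReal (exp (gibbsIncrement μ m φ j (Function.update x j y))) := by
  simp only [gibbsKernel, gibbsIncrement, phiIter_update μ m φ (n - j) (i := j) (by omega)]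

theorem gibbsMeasure_eq_withDensity :
    gibbsMeasure μ m φ = (Measure.pi μ).withDensity fun x =>
      ENNReal.ofReal (exp (gibbsLogDensity μ m φ n x)) := by
  simp only [gibbsMeasure, gibbsLogDensity, gibbsIncrement, Fin.is_lt, Finset.filter_true]

theorem integral_gibbsMeasure [∀ j, SFinite (μ j)] (hφ : Measurable φ) (g : (Fin n → S) → ℝ) :
    ∫ x, g x ∂gibbsMeasure μ m φ
      = ∫ x, g x * exp (gibbsLogDensity μ m φ n x) ∂Measure.pi μ := by
  rw [gibbsMeasure_eq_withDensity, integral_withDensity_eq_integral_toReal_smul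
    (measurable_gibbsLogDensity μ m φ hφ n).exp.ennreal_ofReal
    (ae_of_all _ fun _ => ENNReal.ofReal_lt_top)]
  simp only [ENNReal.toReal_ofReal (exp_nonneg _), smul_eq_mul, mul_comm]

variable [∀ j, IsProbabilityMeasure (μ j)] {m} (hm : ∀ i, m i ≠ 0) {φ} (hφ : Measurable φ)
  {C : ℝ} (hC : ∀ x, |φ x| ≤ C)
include hm hφ hC

theorem abs_gibbsIncrement_le (k : Fin n) (x : Fin n → S) :
    |gibbsIncrement μ m φ k x| ≤ 2 * |m k| * C := by
  have h₁ := abs_phiIter_le μ m φ hm hφ hC (n - (k + 1)) x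
  have h₂ := abs_phiIter_le μ m φ hm hφ hC (n - k) x
  calc |gibbsIncrement μ m φ k x|
      ≤ |m k| * |phiIter μ m φ (n - (k + 1)) x| + |m k| * |phiIter μ m φ (n - k) x| := by
        rw [gibbsIncrement, ← abs_mul, ← abs_mul]; exact abs_sub _ _
    _ ≤ 2 * |m k| * C := by nlinarith [abs_nonneg (m k)]

theorem abs_gibbsLogDensity_le (t : ℕ) (x : Fin n → S) :
    |gibbsLogDensity μ m φ t x| ≤ ∑ k, 2 * |m k| * C :=
  calc |gibbsLogDensity μ m φ t x| ≤ ∑ k : Fin n with k.1 < t, |gibbsIncrement μ m φ k x| :=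
        Finset.abs_sum_le_sum_abs _ _
    _ ≤ ∑ k, |gibbsIncrement μ m φ k x| :=
        Finset.sum_le_sum_of_subset_of_nonneg (Finset.filter_subset _ _) fun _ _ _ => abs_nonneg _
    _ ≤ ∑ k, 2 * |m k| * C :=
        Finset.sum_le_sum fun k _ => abs_gibbsIncrement_le μ hm hφ hC k x

theorem integral_exp_gibbsIncrement_update (t : Fin n) (x : Fin n → S) :
    ∫ y, exp (gibbsIncrement μ m φ t (Function.update x t y)) ∂μ t = 1 := by
  set I := ∫ y, exp (m t * phiIter μ m φ (n - (t + 1)) (Function.update x t y)) ∂μ t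
  have hI : 0 < I := integral_exp_pos <| integrable_exp_of_abs_le (C := |m t| * C)
    (((measurable_phiIter μ m φ hφ _).comp (measurable_update x (a := t))).const_mul (m t))
    fun _ => (abs_mul _ _).trans_le <|
      mul_le_mul_of_nonneg_left (abs_phiIter_le μ m φ hm hφ hC _ _) (abs_nonneg (m t))
  have hphi : exp (m t * phiIter μ m φ (n - t) x) = I := by
    rw [phiIter_sub_eq_log_integral, ← mul_assoc, mul_one_div_cancel (hm t), one_mul, exp_log hI]
  have hincr : ∀ y, gibbsIncrement μ m φ t (Function.update x t y)
      = m t * phiIter μ m φ (n - (t + 1)) (Function.update x t y)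
        - m t * phiIter μ m φ (n - t) x := fun y => by
    rw [gibbsIncrement, phiIter_update μ m φ (n - t) (by omega)]
  simp only [hincr, exp_sub, hphi, integral_div]
  exact div_self hI.ne'

theorem isProbabilityMeasure_gibbsKernel (j : Fin n) (x : Fin n → S) :
    IsProbabilityMeasure (gibbsKernel μ m φ j x) := by
  have hint : Integrable (fun y => exp (gibbsIncrement μ m φ j (Function.update x j y))) (μ j) :=
    integrable_exp_of_abs_le ((measurable_gibbsIncrement μ m φ hφ j).comp (measurable_update x))
      fun _ => abs_gibbsIncrement_le μ hm hφ hC j _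
  constructor
  rw [gibbsKernel_eq_withDensity, withDensity_apply _ MeasurableSet.univ, Measure.restrict_univ,
    ← ofReal_integral_eq_lintegral_ofReal hint (ae_of_all _ fun _ => (exp_pos _).le),
    integral_exp_gibbsIncrement_update μ hm hφ hC, ENNReal.ofReal_one]

theorem integrable_mul_exp_gibbsLogDensity {g : (Fin n → S) → ℝ}
    (hg : Integrable g (Measure.pi μ)) (t : ℕ) :
    Integrable (fun x => g x * exp (gibbsLogDensity μ m φ t x)) (Measure.pi μ) :=
  hg.mul_bdd (measurable_gibbsLogDensity μ m φ hφ t).exp.aestronglyMeasurable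
    (ae_of_all _ fun x => by
      rw [Real.norm_eq_abs, abs_exp, exp_le_exp]
      exact le_of_abs_le (abs_gibbsLogDensity_le μ hm hφ hC t x))

theorem isFiniteMeasure_gibbsMeasure : IsFiniteMeasure (gibbsMeasure μ m φ) := by
  rw [gibbsMeasure_eq_withDensity]
  exact isFiniteMeasure_withDensity_ofReal (by
    simpa using (integrable_mul_exp_gibbsLogDensity μ hm hφ hC (integrable_const 1) n).2)

theorem integral_mul_exp_gibbsLogDensity_succ (t : Fin n) {g : (Fin n → S) → ℝ}
    (hg : Integrable g (Measure.pi μ)) (hg_upd : ∀ x y, g (Function.update x t y) = g x) :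
    ∫ x, g x * exp (gibbsLogDensity μ m φ (t + 1) x) ∂Measure.pi μ
      = ∫ x, g x * exp (gibbsLogDensity μ m φ t x) ∂Measure.pi μ := by
  have hint := integrable_mul_exp_gibbsLogDensity μ hm hφ hC hg (t + 1)
  simp only [gibbsLogDensity_succ, exp_add, ← mul_assoc] at hint ⊢
  exact integral_pi_mul_exp_eq_of_integral_exp_update_eq_one μ t
    (fun x y => by rw [hg_upd, gibbsLogDensity_update μ m φ le_rfl])
    (integral_exp_gibbsIncrement_update μ hm hφ hC t) hint

theorem integral_mul_exp_gibbsLogDensity_eq {g : (Fin n → S) → ℝ}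
    (hg : Integrable g (Measure.pi μ)) {t : ℕ} (ht : t ≤ n)
    (hg_upd : ∀ i : Fin n, t ≤ i → ∀ x y, g (Function.update x i y) = g x) :
    ∫ x, g x * exp (gibbsLogDensity μ m φ n x) ∂Measure.pi μ
      = ∫ x, g x * exp (gibbsLogDensity μ m φ t x) ∂Measure.pi μ := by
  induction ht using Nat.decreasingInduction with
  | self => rfl
  | of_succ k hk ih =>
    rw [ih fun i hi => hg_upd i (by omega),
      integral_mul_exp_gibbsLogDensity_succ μ hm hφ hC ⟨k, hk⟩ hg (hg_upd ⟨k, hk⟩ le_rfl)]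

theorem integral_gibbsMeasure_eq_integral_gibbsKernel (j : Fin n) {h : (Fin n → S) → ℝ}
    (hh : Measurable h) {B : ℝ} (hB : ∀ x, |h x| ≤ B)
    (hh_upd : ∀ i : Fin n, j < i → ∀ x y, h (Function.update x i y) = h x) :
    ∫ x, h x ∂gibbsMeasure μ m φ
      = ∫ x, ∫ y, h (Function.update x j y) ∂gibbsKernel μ m φ j x ∂gibbsMeasure μ m φ := by
  set H : (Fin n → S) → ℝ := fun x => ∫ y, h (Function.update x j y)
    * exp (gibbsIncrement μ m φ j (Function.update x j y)) ∂μ j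
  have hH_kernel : ∀ x, ∫ y, h (Function.update x j y) ∂gibbsKernel μ m φ j x = H x := by
    intro x
    have hℓ : Measurable fun y => gibbsIncrement μ m φ j (Function.update x j y) :=
      (measurable_gibbsIncrement μ m φ hφ j).comp (measurable_update x)
    rw [gibbsKernel_eq_withDensity, integral_withDensity_eq_integral_toReal_smul
      hℓ.exp.ennreal_ofReal (ae_of_all _ fun _ => ENNReal.ofReal_lt_top)]
    simp only [H, ENNReal.toReal_ofReal (exp_nonneg _), smul_eq_mul, mul_comm]
  have hH_meas : Measurable H :=
    (((hh.comp measurable_update').mul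
      ((measurable_gibbsIncrement μ m φ hφ j).comp measurable_update').exp).stronglyMeasurable
      |>.integral_prod_right').measurable
  have hH_bdd : ∀ x, |H x| ≤ B := fun x => by
    have := isProbabilityMeasure_gibbsKernel μ hm hφ hC j x
    simpa [← hH_kernel] using norm_integral_le_of_norm_le_const (μ := gibbsKernel μ m φ j x)
      (ae_of_all _ fun y => (Real.norm_eq_abs _).trans_le (hB (Function.update x j y)))
  have hH_upd : ∀ i : Fin n, j ≤ i → ∀ x y, H (Function.update x i y) = H x := by
    intro i hi x y
    rcases hi.eq_or_lt with rfl | hji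
    · simp only [H, Function.update_idem]
    · simp only [H, Function.update_comm hji.ne', hh_upd i hji,
        gibbsIncrement_update μ m φ hji]
  have hh_int : Integrable h (Measure.pi μ) := .of_bound hh.aestronglyMeasurable B (ae_of_all _ hB)
  have hH_int : Integrable H (Measure.pi μ) :=
    .of_bound hH_meas.aestronglyMeasurable B (ae_of_all _ hH_bdd)
  have hfactor : ∀ x y, h (Function.update x j y)
        * exp (gibbsLogDensity μ m φ (j + 1) (Function.update x j y))
      = h (Function.update x j y) * exp (gibbsIncrement μ m φ j (Function.update x j y))
        * exp (gibbsLogDensity μ m φ j x) := fun x y => by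
    rw [gibbsLogDensity_succ, gibbsLogDensity_update μ m φ le_rfl, exp_add]
    ring
  calc ∫ x, h x ∂gibbsMeasure μ m φ
      = ∫ x, h x * exp (gibbsLogDensity μ m φ (j + 1) x) ∂Measure.pi μ := by
        rw [integral_gibbsMeasure μ m φ hφ, integral_mul_exp_gibbsLogDensity_eq μ hm hφ hC hh_int
          j.isLt fun i hi => hh_upd i hi]
    _ = ∫ x, H x * exp (gibbsLogDensity μ m φ j x) ∂Measure.pi μ := by
        rw [integral_pi_eq_integral_integral_update μ j
          (integrable_mul_exp_gibbsLogDensity μ hm hφ hC hh_int _)]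
        simp only [hfactor, integral_mul_const, H]
    _ = ∫ x, H x ∂gibbsMeasure μ m φ := by
        rw [integral_gibbsMeasure μ m φ hφ, integral_mul_exp_gibbsLogDensity_eq μ hm hφ hC hH_int
          j.isLt.le hH_upd]
    _ = _ := by simp only [hH_kernel]

theorem relEnt_gibbsKernel (j : Fin n) (x : Fin n → S) :
    relEnt (gibbsKernel μ m φ j x) (μ j)
      = ((∫ y, gibbsIncrement μ m φ j (Function.update x j y) ∂gibbsKernel μ m φ j x : ℝ)
        : EReal) := by
  have hmeas := (measurable_gibbsIncrement μ m φ hφ j).comp (measurable_update x (a := j))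
  have := isProbabilityMeasure_gibbsKernel μ hm hφ hC j x
  have hint : Integrable (fun y => gibbsIncrement μ m φ j (Function.update x j y))
      (gibbsKernel μ m φ j x) :=
    .of_bound hmeas.aestronglyMeasurable _
      (ae_of_all _ fun _ => abs_gibbsIncrement_le μ hm hφ hC j _)
  rw [gibbsKernel_eq_withDensity] at hint ⊢
  exact relEnt_withDensity_exp hmeas hint

end GibbsDensity

theorem gibbs_kernel_entropy_identity_general {S : Type*} [MeasurableSpace S]
    {n : ℕ} (μ : Fin n → Measure S) [∀ j, IsProbabilityMeasure (μ j)]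
    (m : Fin n → ℝ) (hm : ∀ i, 0 < m i)
    (φ : (Fin n → S) → ℝ) (hφm : Measurable φ) (hφb : ∃ C : ℝ, ∀ x, |φ x| ≤ C)
    (j : Fin n) :
    ∫ x, (relEnt (gibbsKernel μ m φ j x) (μ j)).toReal ∂(gibbsMeasure μ m φ)
      = m j * ((∫ x, phiIter μ m φ (n - ((j : ℕ) + 1)) x ∂(gibbsMeasure μ m φ))
        - ∫ x, phiIter μ m φ (n - (j : ℕ)) x ∂(gibbsMeasure μ m φ)) := by
  obtain ⟨C, hC⟩ := hφb
  have hm₀ : ∀ i, m i ≠ 0 := fun i => (hm i).ne'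
  have := isFiniteMeasure_gibbsMeasure μ hm₀ hφm hC
  have hphi : ∀ k, Integrable (phiIter μ m φ k) (gibbsMeasure μ m φ) := fun k =>
    .of_bound (measurable_phiIter μ m φ hφm k).aestronglyMeasurable C
      (ae_of_all _ (abs_phiIter_le μ m φ hm₀ hφm hC k))
  calc ∫ x, (relEnt (gibbsKernel μ m φ j x) (μ j)).toReal ∂(gibbsMeasure μ m φ)
      = ∫ x, ∫ y, gibbsIncrement μ m φ j (Function.update x j y) ∂gibbsKernel μ m φ j x
          ∂gibbsMeasure μ m φ := by
        simp only [relEnt_gibbsKernel μ hm₀ hφm hC, EReal.toReal_coe]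
    _ = ∫ x, gibbsIncrement μ m φ j x ∂gibbsMeasure μ m φ :=
        (integral_gibbsMeasure_eq_integral_gibbsKernel μ hm₀ hφm hC j
          (measurable_gibbsIncrement μ m φ hφm j) (abs_gibbsIncrement_le μ hm₀ hφm hC j)
          fun _ hi => gibbsIncrement_update μ m φ hi).symm
    _ = _ := by
        rw [mul_sub, ← integral_const_mul, ← integral_const_mul,
          ← integral_sub ((hphi _).const_mul _) ((hphi _).const_mul _)]
        rfl

/-- For the Gibbs measure `G = G_{φ,m}`, for each level `j`:
`∫ H(K_j(x⁽ʲ⁻¹⁾,·) | μ_j) dG⁽ʲ⁻¹⁾ = m_j (∫ φ_j dG⁽ʲ⁾ − ∫ φ_{j−1} dG⁽ʲ⁻¹⁾)`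
(marginals identified with integrals over `G` since `φ_j` depends only on the
first `j` coordinates). -/
theorem gibbs_kernel_entropy_identity {S : Type*} [MeasurableSpace S] [Nonempty S]
    {n : ℕ} (μ : Fin n → Measure S) [∀ j, IsProbabilityMeasure (μ j)]
    (m : Fin n → ℝ) (hm : ∀ i, 0 < m i)
    (φ : (Fin n → S) → ℝ) (hφm : Measurable φ) (hφb : ∃ C : ℝ, ∀ x, |φ x| ≤ C)
    (j : Fin n) :
    ∫ x, (relEnt (gibbsKernel μ m φ j x) (μ j)).toReal ∂(gibbsMeasure μ m φ)
      = m j * ((∫ x, phiIter μ m φ (n - ((j : ℕ) + 1)) x ∂(gibbsMeasure μ m φ))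
        - ∫ x, phiIter μ m φ (n - (j : ℕ)) x ∂(gibbsMeasure μ m φ)) :=
  gibbs_kernel_entropy_identity_general μ m hm φ hφm hφb j
end
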